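/- Let A, B, C ≥ 0, D ∈ ℝ, ρ, γ ∈ (0,1], and f(t,y,z) = A - B·sgn(y)·|y| - C·sgn(y)·|y|^ρ·|z|^γ + D·y·|z|^γ. Then there exists L ≥ 0 (one may take L = max{B+|D|, 2C, C+|D|}) such that for all t₁,t₂ ≥ 0 and y₁,y₂,z₁,z₂ ∈ ℝ: |f(t₁,y₁,z₁) - f(t₂,y₂,z₂)| ≤ L·[(1+|z₁|+|z₂|)(1+|y₁|+|y₂|)|t₁-t₂| + (1+|z₁|+|z₂|)|y₁-y₂| + (1+|z₁|+|z₂|)|y₁-y₂|^ρ + (1+|y₁|+|y₂|)|z₁-z₂|^γ]. -/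

import Mathlib

/-
The drift `f` does not depend on `t` and, since `sgn' y * |y| = y`, it is an affine function of
`y` plus two products `φ(y) ψ(z)` with `φ(y) = sgn' y |y|^ρ` or `φ(y) = y` and `ψ(z) = |z|^γ`.
For `0 ≤ p ≤ 1` the map `x ↦ x^p` is `p`-Hölder with constant `1` on `[0, ∞)` by subadditivity,
so `|·|^p` is too, and the odd extension `sgn' y |y|^p` is `p`-Hölder with constant `2`.
Splitting `φ₁ψ₁ - φ₂ψ₂ = (φ₁ - φ₂)ψ₁ + φ₂(ψ₁ - ψ₂)` and using `|x|^p ≤ 1 + |x|` then gives the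
bound with `L = |B| + 2|C| + |D|`.
-/

noncomputable def sgn' (y : ℝ) : ℝ := if 0 ≤ y then 1 else -1

open Real

lemma sgn'_mul_abs (y : ℝ) : sgn' y * |y| = y := by
  unfold sgn'
  split_ifs with hy
  · rw [abs_of_nonneg hy, one_mul]
  · rw [abs_of_neg (not_le.1 hy), neg_one_mul, neg_neg]

lemma abs_sgn' (y : ℝ) : |sgn' y| = 1 := by
  unfold sgn'
  split_ifs <;> simp

section Holder

variable {p : ℝ}

lemma Real.abs_rpow_sub_rpow_le {a b : ℝ} (ha : 0 ≤ a) (hb : 0 ≤ b) (hp : 0 ≤ p) (hp1 : p ≤ 1) :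
    |a ^ p - b ^ p| ≤ |a - b| ^ p := by
  wlog hba : b ≤ a generalizing a b
  · rw [abs_sub_comm, abs_sub_comm a b]
    exact this hb ha (le_of_not_ge hba)
  have hmono : b ^ p ≤ a ^ p := rpow_le_rpow hb hba hp
  have hsub : a ^ p ≤ (a - b) ^ p + b ^ p := by
    simpa using rpow_add_le_add_rpow (sub_nonneg.2 hba) hb hp hp1
  rw [abs_of_nonneg (sub_nonneg.2 hmono), abs_of_nonneg (sub_nonneg.2 hba)]
  linarith

lemma abs_abs_rpow_sub_abs_rpow_le (a b : ℝ) (hp : 0 ≤ p) (hp1 : p ≤ 1) :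
    |(|a| ^ p - |b| ^ p)| ≤ |a - b| ^ p :=
  (abs_rpow_sub_rpow_le (abs_nonneg a) (abs_nonneg b) hp hp1).trans
    (rpow_le_rpow (abs_nonneg _) (abs_abs_sub_abs_le_abs_sub a b) hp)

lemma abs_rpow_le_one_add_abs (x : ℝ) (hp : 0 ≤ p) (hp1 : p ≤ 1) : |x| ^ p ≤ 1 + |x| := by
  rcases le_or_gt |x| 1 with hx | hx
  · linarith [rpow_le_one (abs_nonneg x) hx hp, abs_nonneg x]
  · linarith [rpow_le_self_of_one_le hx.le hp1]

lemma abs_add_rpow_le_two_mul_of_nonneg_of_neg {a b : ℝ} (ha : 0 ≤ a) (hb : b < 0) (hp : 0 ≤ p) :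
    |a| ^ p + |b| ^ p ≤ 2 * |a - b| ^ p := by
  have hab : |a| ^ p ≤ |a - b| ^ p :=
    rpow_le_rpow (abs_nonneg _) (by rw [abs_of_nonneg ha, abs_of_pos (by linarith)]; linarith) hp
  have hba : |b| ^ p ≤ |a - b| ^ p :=
    rpow_le_rpow (abs_nonneg _) (by rw [abs_of_neg hb, abs_of_pos (by linarith)]; linarith) hp
  linarith

lemma abs_sgn'_mul_rpow_sub_le (y₁ y₂ : ℝ) (hp : 0 ≤ p) (hp1 : p ≤ 1) :
    |sgn' y₁ * |y₁| ^ p - sgn' y₂ * |y₂| ^ p| ≤ 2 * |y₁ - y₂| ^ p := by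
  have hsame := abs_abs_rpow_sub_abs_rpow_le y₁ y₂ hp hp1
  have hnn : 0 ≤ |y₁ - y₂| ^ p := rpow_nonneg (abs_nonneg _) p
  have hpow₁ : 0 ≤ |y₁| ^ p := rpow_nonneg (abs_nonneg _) p
  have hpow₂ : 0 ≤ |y₂| ^ p := rpow_nonneg (abs_nonneg _) p
  unfold sgn'
  rcases le_or_gt 0 y₁ with h₁ | h₁ <;> rcases le_or_gt 0 y₂ with h₂ | h₂
  · simp only [if_pos h₁, if_pos h₂, one_mul]
    linarith
  · simp only [if_pos h₁, if_neg (not_le.2 h₂), one_mul, neg_one_mul, sub_neg_eq_add]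
    rw [abs_of_nonneg (by positivity)]
    exact abs_add_rpow_le_two_mul_of_nonneg_of_neg h₁ h₂ hp
  · simp only [if_neg (not_le.2 h₁), if_pos h₂, one_mul, neg_one_mul, ← neg_add', abs_neg]
    rw [abs_of_nonneg (by positivity), add_comm, abs_sub_comm]
    exact abs_add_rpow_le_two_mul_of_nonneg_of_neg h₂ h₁ hp
  · simp only [if_neg (not_le.2 h₁), if_neg (not_le.2 h₂), neg_one_mul, neg_sub_neg]
    rw [abs_sub_comm]
    linarith

end Holder

lemma abs_mul_sub_mul_le (a₁ a₂ b₁ b₂ : ℝ) :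
    |a₁ * b₁ - a₂ * b₂| ≤ |a₁ - a₂| * |b₁| + |a₂| * |b₁ - b₂| := by
  calc |a₁ * b₁ - a₂ * b₂| = |(a₁ - a₂) * b₁ + a₂ * (b₁ - b₂)| := by ring_nf
    _ ≤ |a₁ - a₂| * |b₁| + |a₂| * |b₁ - b₂| := by
      rw [← abs_mul, ← abs_mul]
      exact abs_add_le _ _

theorem metal_holder_condition_general (A B C D ρ γ : ℝ)
    (hρ0 : 0 < ρ) (hρ1 : ρ ≤ 1) (hγ0 : 0 < γ) (hγ1 : γ ≤ 1)
    (f : ℝ → ℝ → ℝ → ℝ)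
    (hf : ∀ t y z, f t y z =
      A - B * sgn' y * |y| - C * sgn' y * |y| ^ ρ * |z| ^ γ + D * y * |z| ^ γ) :
    ∃ L, 0 ≤ L ∧
      ∀ t₁ t₂ y₁ y₂ z₁ z₂ : ℝ, 0 ≤ t₁ → 0 ≤ t₂ →
        |f t₁ y₁ z₁ - f t₂ y₂ z₂| ≤
          L * ((1 + |z₁| + |z₂|) * (1 + |y₁| + |y₂|) * |t₁ - t₂|
            + (1 + |z₁| + |z₂|) * |y₁ - y₂|
            + (1 + |z₁| + |z₂|) * |y₁ - y₂| ^ ρ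
            + (1 + |y₁| + |y₂|) * |z₁ - z₂| ^ γ) := by
  refine ⟨|B| + 2 * |C| + |D|, by positivity, fun t₁ t₂ y₁ y₂ z₁ z₂ _ _ => ?_⟩
  set Sz := 1 + |z₁| + |z₂|
  set Sy := 1 + |y₁| + |y₂|
  set φ : ℝ → ℝ := fun y => sgn' y * |y| ^ ρ
  set ψ : ℝ → ℝ := fun z => |z| ^ γ
  have hdiff : f t₁ y₁ z₁ - f t₂ y₂ z₂ = -(B * (y₁ - y₂)) - C * (φ y₁ * ψ z₁ - φ y₂ * ψ z₂)
      + D * (y₁ * ψ z₁ - y₂ * ψ z₂) := by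
    simp only [hf, mul_assoc, sgn'_mul_abs, φ, ψ]
    ring
  have hψ₁ : |ψ z₁| ≤ Sz := by
    rw [abs_of_nonneg (by positivity)]
    linarith [abs_rpow_le_one_add_abs z₁ hγ0.le hγ1, abs_nonneg z₂]
  have hψ : |ψ z₁ - ψ z₂| ≤ |z₁ - z₂| ^ γ := abs_abs_rpow_sub_abs_rpow_le z₁ z₂ hγ0.le hγ1
  have hφ₂ : |φ y₂| ≤ Sy := by
    rw [abs_mul, abs_sgn', one_mul, abs_of_nonneg (by positivity)]
    linarith [abs_rpow_le_one_add_abs y₂ hρ0.le hρ1, abs_nonneg y₁]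
  have hφ : |φ y₁ - φ y₂| ≤ 2 * |y₁ - y₂| ^ ρ := abs_sgn'_mul_rpow_sub_le y₁ y₂ hρ0.le hρ1
  have hy₂ : |y₂| ≤ Sy := by linarith [abs_nonneg y₁]
  have hSz : 1 ≤ Sz := by linarith [abs_nonneg z₁, abs_nonneg z₂]
  have hB : |B * (y₁ - y₂)| ≤ |B| * (Sz * |y₁ - y₂|) := by
    rw [abs_mul]
    gcongr
    exact le_mul_of_one_le_left (abs_nonneg _) hSz
  have hC : |φ y₁ * ψ z₁ - φ y₂ * ψ z₂| ≤ 2 * (Sz * |y₁ - y₂| ^ ρ) + Sy * |z₁ - z₂| ^ γ :=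
    calc _ ≤ |φ y₁ - φ y₂| * |ψ z₁| + |φ y₂| * |ψ z₁ - ψ z₂| := abs_mul_sub_mul_le _ _ _ _
      _ ≤ 2 * |y₁ - y₂| ^ ρ * Sz + Sy * |z₁ - z₂| ^ γ := by gcongr
      _ = _ := by ring
  have hD : |y₁ * ψ z₁ - y₂ * ψ z₂| ≤ Sz * |y₁ - y₂| + Sy * |z₁ - z₂| ^ γ :=
    calc _ ≤ |y₁ - y₂| * |ψ z₁| + |y₂| * |ψ z₁ - ψ z₂| := abs_mul_sub_mul_le _ _ _ _
      _ ≤ |y₁ - y₂| * Sz + Sy * |z₁ - z₂| ^ γ := by gcongr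
      _ = _ := by ring
  rw [hdiff]
  calc _ ≤ |B * (y₁ - y₂)| + |C| * |φ y₁ * ψ z₁ - φ y₂ * ψ z₂|
        + |D| * |y₁ * ψ z₁ - y₂ * ψ z₂| := by
        rw [← abs_mul, ← abs_mul, ← abs_neg (B * _)]
        exact (abs_add_le _ _).trans (add_le_add_left (abs_sub _ _) _)
    _ ≤ |B| * (Sz * |y₁ - y₂|) + |C| * (2 * (Sz * |y₁ - y₂| ^ ρ) + Sy * |z₁ - z₂| ^ γ)
        + |D| * (Sz * |y₁ - y₂| + Sy * |z₁ - z₂| ^ γ) := by gcongr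
    _ ≤ _ := by
      have : 0 ≤ Sz * Sy * |t₁ - t₂| := by positivity
      have : 0 ≤ Sz * |y₁ - y₂| := by positivity
      have : 0 ≤ Sz * |y₁ - y₂| ^ ρ := by positivity
      have : 0 ≤ Sy * |z₁ - z₂| ^ γ := by positivity
      nlinarith [abs_nonneg B, abs_nonneg C, abs_nonneg D]

theorem metal_holder_condition (A B C D ρ γ : ℝ)
    (hA : 0 ≤ A) (hB : 0 ≤ B) (hC : 0 ≤ C)
    (hρ0 : 0 < ρ) (hρ1 : ρ ≤ 1) (hγ0 : 0 < γ) (hγ1 : γ ≤ 1)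
    (f : ℝ → ℝ → ℝ → ℝ)
    (hf : ∀ t y z, f t y z =
      A - B * sgn' y * |y| - C * sgn' y * |y| ^ ρ * |z| ^ γ + D * y * |z| ^ γ) :
    ∃ L, 0 ≤ L ∧
      ∀ t₁ t₂ y₁ y₂ z₁ z₂ : ℝ, 0 ≤ t₁ → 0 ≤ t₂ →
        |f t₁ y₁ z₁ - f t₂ y₂ z₂| ≤
          L * ((1 + |z₁| + |z₂|) * (1 + |y₁| + |y₂|) * |t₁ - t₂|
            + (1 + |z₁| + |z₂|) * |y₁ - y₂|
            + (1 + |z₁| + |z₂|) * |y₁ - y₂| ^ ρ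
            + (1 + |y₁| + |y₂|) * |z₁ - z₂| ^ γ) :=
  metal_holder_condition_general A B C D ρ γ hρ0 hρ1 hγ0 hγ1 f hf
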